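/- arXiv:1510.07386 — 2 statements merged into one kernel-verified Lean document; each statement's English description precedes it below -/
import Mathlib

section
/- A point x* ∈ Ω_0 satisfies f(x*) ≤ f(y) for all y ∈ Ω_0 (i.e., x* is an optimal solution of the problem min_{x∈Ω_0} f(x)) if and only if there exist 𝐱* ∈ Ω and λ* ∈ ℝ^{nq} such that 𝐱* = 1_n ⊗ x*, L𝐱* = 0, and there exists g ∈ ∂𝐟(𝐱*) with P_{T_Ω(𝐱*)}(−g − αLλ*) = 0 (equivalently, −g − αLλ* ∈ N_Ω(𝐱*)). -/
open Matrix MeasureTheory Filter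

noncomputable section

variable {E : Type*} [NormedAddCommGroup E] [InnerProductSpace ℝ E]

/-- Subdifferential of a real-valued function. -/
def subdiff (h : E → ℝ) (x : E) : Set E :=
  {g | ∀ y, h x + (inner ℝ g (y - x) : ℝ) ≤ h y}

/-- Normal cone of a set `K` at `x`. -/
def normalCone (K : Set E) (x : E) : Set E :=
  {d | ∀ y ∈ K, (inner ℝ d (y - x) : ℝ) ≤ 0}

/-- Tangent cone of a set `K` at `x`. -/
def tangentCone (K : Set E) (x : E) : Set E :=
  closure {d | ∃ t : ℝ, 0 < t ∧ x + t • d ∈ K}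

/-- `p` is the metric projection of `u` onto `K`. -/
def IsProjOn (K : Set E) (u p : E) : Prop :=
  p ∈ K ∧ ∀ v ∈ K, ‖u - p‖ ≤ ‖u - v‖

/-- Local absolute continuity on `[0, ∞)`. -/
def LocAC {F : Type*} [NormedAddCommGroup F] [NormedSpace ℝ F] [CompleteSpace F]
    (φ : ℝ → F) : Prop :=
  (∀ᵐ t ∂(volume.restrict (Set.Ici (0:ℝ))), DifferentiableAt ℝ φ t) ∧
  LocallyIntegrableOn (deriv φ) (Set.Ici 0) volume ∧
  ∀ s t : ℝ, 0 ≤ s → s ≤ t → φ t - φ s = ∫ τ in s..t, deriv φ τ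

/-- Weighted Laplacian matrix. -/
def lap (n : ℕ) (a : Fin n → Fin n → ℝ) : Matrix (Fin n) (Fin n) ℝ :=
  Matrix.of fun i j => if i = j then ∑ k ∈ Finset.univ.erase i, a i k else - a i j

/-- `L = Lₙ ⊗ I_q`. -/
def bigL (n q : ℕ) (a : Fin n → Fin n → ℝ) :
    Matrix (Fin n × Fin q) (Fin n × Fin q) ℝ :=
  Matrix.kroneckerMap (· * ·) (lap n a) (1 : Matrix (Fin q) (Fin q) ℝ)

/-- `L` as a linear map on Euclidean space. -/
def Lmap (n q : ℕ) (a : Fin n → Fin n → ℝ) :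
    EuclideanSpace ℝ (Fin n × Fin q) →ₗ[ℝ] EuclideanSpace ℝ (Fin n × Fin q) :=
  Matrix.toEuclideanLin (bigL n q a)

/-- `i`-th block of a stacked vector. -/
def blk {n q : ℕ} (x : EuclideanSpace ℝ (Fin n × Fin q)) (i : Fin n) :
    EuclideanSpace ℝ (Fin q) := WithLp.toLp 2 (fun j => x (i, j))

/-- The product constraint set `Ω = Ω₁ × ⋯ × Ωₙ`. -/
def prodSet (n q : ℕ) (Ω : Fin n → Set (EuclideanSpace ℝ (Fin q))) :
    Set (EuclideanSpace ℝ (Fin n × Fin q)) :=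
  {x | ∀ i, blk x i ∈ Ω i}

/-- `𝐟(𝐱) = ∑ᵢ fⁱ(xᵢ)`. -/
def bigF (n q : ℕ) (f : Fin n → EuclideanSpace ℝ (Fin q) → ℝ)
    (x : EuclideanSpace ℝ (Fin n × Fin q)) : ℝ :=
  ∑ i, f i (blk x i)

/-- `1ₙ ⊗ v`. -/
def oneTensor (n q : ℕ) (v : EuclideanSpace ℝ (Fin q)) :
    EuclideanSpace ℝ (Fin n × Fin q) := WithLp.toLp 2 (fun p : Fin n × Fin q => v p.2)

/-!
Since the graph is connected, `ker L` is the consensus subspace `{1ₙ ⊗ y}`, so `x*` is optimal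
on `Ω₀` exactly when `1ₙ ⊗ x*` minimises `𝐟` on `Ω ∩ ker L`. Two Hahn–Banach separations, made
non-vertical by the common interior point of the `Ωᵢ`, turn optimality into `g ∈ ∂𝐟(𝐱*)` and
`d ∈ N_Ω(𝐱*)` with `g + d ⊥ ker L`. As `L` is symmetric, `(ker L)ᗮ = range L`, so
`g + d = -α L λ*`; and a normal vector projects to `0` on the tangent cone. Conversely, the
projection condition makes `-g - α L λ*` nonpositive on the feasible direction `1ₙ ⊗ (y - x*)`,
which is orthogonal to `range L`, and the subgradient inequality gives `f(x*) ≤ f(y)`.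
-/

open Set Topology
open scoped Pointwise

local notation "⟪" x ", " y "⟫" => @inner ℝ _ _ x y

lemma le_of_forall_pos_add_mul_le {a c s : ℝ} (h : ∀ r : ℝ, 0 < r → a + r * c ≤ s) :
    a ≤ s := by
  have hcont : Continuous fun r : ℝ => a + r * c := by fun_prop
  have hlim : Tendsto (fun r : ℝ => a + r * c) (𝓝[>] 0) (𝓝 a) := by
    simpa using (hcont.tendsto 0).mono_left nhdsWithin_le_nhds
  exact le_of_tendsto hlim (eventually_nhdsWithin_of_forall h)

lemma nonpos_of_forall_pos_add_mul_le {a c s : ℝ} (h : ∀ r : ℝ, 0 < r → a + r * c ≤ s) :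
    c ≤ 0 := by
  by_contra! hc
  have := h ((|s - a| + 1) / c) (by positivity)
  rw [div_mul_cancel₀ _ hc.ne'] at this
  linarith [le_abs_self (s - a)]

lemma exists_inner_add_mul_of_dual_prod [CompleteSpace E] (φ : StrongDual ℝ (E × ℝ)) :
    ∃ w : E, ∃ c : ℝ, ∀ y t, φ (y, t) = ⟪w, y⟫ + t * c := by
  refine ⟨(InnerProductSpace.toDual ℝ E).symm (φ.comp (ContinuousLinearMap.inl ℝ E ℝ)),
    φ (0, 1), fun y t => ?_⟩
  have h : ((y, t) : E × ℝ) = (y, 0) + t • ((0 : E), (1 : ℝ)) := by simp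
  rw [InnerProductSpace.toDual_symm_apply, h, map_add, map_smul, smul_eq_mul]
  rfl

lemma ConvexOn.convex_strictEpigraph {s : Set E} {Φ : E → ℝ} (hΦ : ConvexOn ℝ s Φ) :
    Convex ℝ {p : E × ℝ | p.1 ∈ s ∧ Φ p.1 < p.2} :=
  convex_iff_openSegment_subset.2 fun p hp q hq =>
    hΦ.openSegment_subset_strict_epigraph p q hp ⟨hq.1, hq.2.le⟩

lemma ContinuousOn.isOpen_strictEpigraph_interior {F : Type*} [TopologicalSpace F] {K : Set F}
    {Φ : F → ℝ} (hΦc : ContinuousOn Φ K) :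
    IsOpen {p : F × ℝ | p.1 ∈ interior K ∧ Φ p.1 < p.2} := by
  have h := ((hΦc.mono interior_subset).comp continuousOn_fst (mapsTo_preimage _ _)).sub
    continuousOn_snd |>.isOpen_inter_preimage (isOpen_interior.preimage continuous_fst)
    (isOpen_Iio (a := (0 : ℝ)))
  convert h using 1
  ext p
  simp [sub_neg]

lemma Convex.forall_le_of_forall_interior_le {F : Type*} [NormedAddCommGroup F] [NormedSpace ℝ F]
    {K : Set F} (hK : Convex ℝ K) (hKi : (interior K).Nonempty) {ψ : F → ℝ}
    (hψ : ContinuousOn ψ K) {s : ℝ} (h : ∀ y ∈ interior K, ψ y ≤ s) : ∀ y ∈ K, ψ y ≤ s := by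
  intro y hy
  have hy' : y ∈ closure (interior K) := by
    rw [hK.closure_interior_eq_closure_of_nonempty_interior hKi]
    exact subset_closure hy
  exact ContinuousWithinAt.closure_le hy' ((hψ y hy).mono interior_subset)
    continuousWithinAt_const h

/-- Separate the strict epigraph of `Φ` over `interior K` from `C × {Φ x}`; the common interior
point makes the separating hyperplane non-vertical. -/
theorem exists_subgradOn_neg_mem_normalCone_of_isMinOn [CompleteSpace E] {Φ : E → ℝ}
    {K C : Set E} (hΦ : ConvexOn ℝ K Φ) (hΦc : ContinuousOn Φ K) (hC : Convex ℝ C)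
    (hKC : (interior K ∩ C).Nonempty) {x : E} (hxK : x ∈ K) (hxC : x ∈ C)
    (hmin : IsMinOn Φ (K ∩ C) x) :
    ∃ w, (∀ y ∈ K, Φ x + ⟪w, y - x⟫ ≤ Φ y) ∧ -w ∈ normalCone C x := by
  obtain ⟨z, hzK, hzC⟩ := hKC
  set A : Set (E × ℝ) := {p | p.1 ∈ interior K ∧ Φ p.1 < p.2}
  have hAc : Convex ℝ A := (hΦ.subset interior_subset hΦ.1.interior).convex_strictEpigraph
  have hAo : IsOpen A := hΦc.isOpen_strictEpigraph_interior
  have hdisj : Disjoint A (C ×ˢ {Φ x}) := by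
    rw [Set.disjoint_left]
    rintro ⟨y, t⟩ ⟨hyK, hlt⟩ ⟨hyC, rfl⟩
    exact (isMinOn_iff.1 hmin y ⟨interior_subset hyK, hyC⟩).not_gt hlt
  obtain ⟨φ, s, hφA, hφB⟩ :=
    geometric_hahn_banach_open hAc hAo (hC.prod (convex_singleton _)) hdisj
  obtain ⟨w, c, hφ⟩ := exists_inner_add_mul_of_dual_prod φ
  have hA : ∀ y ∈ interior K, ∀ r : ℝ, 0 < r → ⟪w, y⟫ + Φ y * c + r * c ≤ s := by
    intro y hy r hr
    have := hφA (y, Φ y + r) ⟨hy, by linarith⟩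
    rw [hφ] at this
    linarith
  have hB : ∀ v ∈ C, s ≤ ⟪w, v⟫ + Φ x * c := fun v hv => by
    simpa [hφ] using hφB (v, Φ x) ⟨hv, rfl⟩
  have hc : c < 0 := by
    refine (nonpos_of_forall_pos_add_mul_le (hA z hzK)).lt_of_ne fun hc0 => ?_
    have := hφA (z, Φ z + 1) ⟨hzK, by linarith⟩
    have hBz := hB z hzC
    simp only [hφ, hc0, mul_zero, add_zero] at this hBz
    linarith
  have hK : ∀ y ∈ K, ⟪w, y⟫ + Φ y * c ≤ s :=
    hΦ.1.forall_le_of_forall_interior_le ⟨z, hzK⟩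
      ((continuous_const.inner continuous_id).continuousOn.add (hΦc.mul continuousOn_const))
      fun y hy => le_of_forall_pos_add_mul_le (hA y hy)
  have hinner : ∀ u, ⟪(-c)⁻¹ • w, u⟫ = ⟪w, u⟫ / -c := fun u => by
    rw [real_inner_smul_left, inv_mul_eq_div]
  refine ⟨(-c)⁻¹ • w, fun y hy => ?_, fun v hv => ?_⟩
  · have key : (⟪w, y⟫ - ⟪w, x⟫) / -c ≤ Φ y - Φ x := by
      rw [div_le_iff₀ (by linarith)]
      nlinarith [hK y hy, hB x hxC]
    rw [hinner, inner_sub_right]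
    linarith
  · rw [inner_neg_left, hinner, inner_sub_right, neg_nonpos]
    apply div_nonneg _ (by linarith)
    linarith [hK x hxK, hB v hv]

theorem exists_subgrad_add_normal_mem_orthogonal_of_isMinOn [CompleteSpace E] {Φ : E → ℝ}
    (hΦ : ConvexOn ℝ univ Φ) (hΦc : Continuous Φ) {K : Set E} (hK : Convex ℝ K)
    {V : Submodule ℝ E} (hKV : (interior K ∩ V).Nonempty) {x : E} (hxK : x ∈ K)
    (hxV : x ∈ V) (hmin : IsMinOn Φ (K ∩ V) x) :
    ∃ g ∈ subdiff Φ x, ∃ d ∈ normalCone K x, g + d ∈ Vᗮ := by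
  obtain ⟨w, hwK, hwV⟩ := exists_subgradOn_neg_mem_normalCone_of_isMinOn
    (hΦ.subset (subset_univ K) hK) hΦc.continuousOn V.convex hKV hxK hxV hmin
  have hw : w ∈ Vᗮ := by
    refine (Submodule.mem_orthogonal' _ _).2 fun v hv => le_antisymm ?_ ?_
    · simpa using hwV (x - v) (V.sub_mem hxV hv)
    · simpa using hwV (x + v) (V.add_mem hxV hv)
  set Ψ : E → ℝ := fun y => Φ y - ⟪w, y⟫
  have hΨ : ConvexOn ℝ univ Ψ := hΦ.sub ((innerₛₗ ℝ w).concaveOn convex_univ)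
  have hΨmin : IsMinOn Ψ (univ ∩ K) x := isMinOn_iff.2 fun y hy => by
    have := hwK y hy.2
    simp only [Ψ, inner_sub_right] at this ⊢
    linarith
  obtain ⟨p, hp, hpK⟩ := exists_subgradOn_neg_mem_normalCone_of_isMinOn hΨ
    (hΦc.sub (continuous_const.inner continuous_id)).continuousOn hK
    (by simpa using ⟨x, hxK⟩) (mem_univ x) hxK hΨmin
  refine ⟨p + w, fun y => ?_, -p, hpK, by simpa using hw⟩
  have := hp y (mem_univ y)
  simp only [Ψ, inner_add_left, inner_sub_right] at this ⊢
  linarith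

lemma isProjOn_zero_iff_inner_nonpos {T : Set E} {u : E} (h0 : (0 : E) ∈ T)
    (hT : ∀ v ∈ T, ∀ r : ℝ, 0 < r → r • v ∈ T) :
    IsProjOn T u 0 ↔ ∀ v ∈ T, ⟪u, v⟫ ≤ 0 := by
  have hsq : ∀ v, ‖u - v‖ ^ 2 = ‖u‖ ^ 2 - 2 * ⟪u, v⟫ + ‖v‖ ^ 2 :=
    norm_sub_sq_real u
  constructor
  · rintro ⟨-, hproj⟩ v hv
    have key : ∀ r : ℝ, 0 < r → 2 * ⟪u, v⟫ + r * -‖v‖ ^ 2 ≤ 0 := by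
      intro r hr
      have h := pow_le_pow_left₀ (norm_nonneg _) (hproj (r • v) (hT v hv r hr)) 2
      rw [sub_zero, hsq, real_inner_smul_right, norm_smul, Real.norm_of_nonneg hr.le,
        mul_pow] at h
      nlinarith
    linarith [le_of_forall_pos_add_mul_le key]
  · refine fun h => ⟨h0, fun v hv => ?_⟩
    rw [sub_zero, ← pow_le_pow_iff_left₀ (norm_nonneg _) (norm_nonneg _) two_ne_zero, hsq]
    nlinarith [h v hv, sq_nonneg ‖v‖]

lemma sub_mem_tangentCone {K : Set E} {x y : E} (hy : y ∈ K) : y - x ∈ tangentCone K x :=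
  subset_closure ⟨1, one_pos, by simpa using hy⟩

lemma smul_mem_tangentCone {K : Set E} {x v : E} (hv : v ∈ tangentCone K x) {r : ℝ}
    (hr : 0 < r) : r • v ∈ tangentCone K x := by
  have hsub : r • {d : E | ∃ t : ℝ, 0 < t ∧ x + t • d ∈ K} ⊆
      {d : E | ∃ t : ℝ, 0 < t ∧ x + t • d ∈ K} := by
    rintro _ ⟨d, ⟨t, ht, hd⟩, rfl⟩
    exact ⟨t / r, div_pos ht hr, by rwa [smul_smul, div_mul_cancel₀ _ hr.ne']⟩
  have := Set.smul_mem_smul_set (a := r) hv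
  rw [tangentCone, ← closure_smul₀] at this
  exact closure_mono hsub this

lemma inner_nonpos_of_mem_normalCone_of_mem_tangentCone {K : Set E} {x u v : E}
    (hu : u ∈ normalCone K x) (hv : v ∈ tangentCone K x) : ⟪u, v⟫ ≤ 0 := by
  have hclosed : IsClosed {v : E | ⟪u, v⟫ ≤ 0} :=
    isClosed_le (continuous_const.inner continuous_id) continuous_const
  refine closure_minimal (fun d hd => ?_) hclosed hv
  obtain ⟨t, ht, hxd⟩ := hd
  have := hu _ hxd
  rw [add_sub_cancel_left, real_inner_smul_right] at this
  exact nonpos_of_mul_nonpos_right this ht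

lemma isProjOn_tangentCone_iff {K : Set E} {x u : E} (hx : x ∈ K) :
    IsProjOn (tangentCone K x) u 0 ↔ ∀ v ∈ tangentCone K x, ⟪u, v⟫ ≤ 0 := by
  refine isProjOn_zero_iff_inner_nonpos ?_ fun v hv r hr => smul_mem_tangentCone hv hr
  simpa using sub_mem_tangentCone (x := x) hx

section Laplacian

variable {n q : ℕ} {a : Fin n → Fin n → ℝ}

lemma lap_mulVec_apply (c : Fin n → ℝ) (i : Fin n) :
    (lap n a *ᵥ c) i = ∑ k, a i k * (c i - c k) := by
  have hoff : ∀ k ∈ Finset.univ.erase i, lap n a i k * c k = -(a i k * c k) := fun k hk => by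
    simp [lap, (Finset.ne_of_mem_erase hk).symm]
  rw [mulVec, dotProduct, ← Finset.add_sum_erase _ _ (Finset.mem_univ i),
    Finset.sum_congr rfl hoff,
    ← Finset.sum_erase (f := fun k => a i k * (c i - c k)) (a := i) _ (by simp)]
  simp only [lap, of_apply, if_true, Finset.sum_mul, ← Finset.sum_add_distrib]
  exact Finset.sum_congr rfl fun k _ => by ring

lemma Lmap_apply (x : EuclideanSpace ℝ (Fin n × Fin q)) (i : Fin n) (j : Fin q) :
    Lmap n q a x (i, j) = (lap n a *ᵥ fun k => x (k, j)) i := by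
  simp [Lmap, bigL, mulVec, dotProduct, Fintype.sum_prod_type, kroneckerMap_apply, one_apply]

lemma Lmap_oneTensor (v : EuclideanSpace ℝ (Fin q)) : Lmap n q a (oneTensor n q v) = 0 := by
  ext ⟨i, j⟩
  simp [Lmap_apply, lap_mulVec_apply, oneTensor]

lemma isSymmetric_Lmap (hsymm : ∀ i j, a i j = a j i) : (Lmap n q a).IsSymmetric := by
  rw [Lmap, isSymmetric_toEuclideanLin_iff]
  ext ⟨i, j⟩ ⟨k, l⟩
  by_cases hik : i = k
  · subst hik; simp [bigL, lap, one_apply, eq_comm]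
  · simp [bigL, lap, one_apply, hik, Ne.symm hik, hsymm i k, eq_comm]

lemma orthogonal_ker_Lmap (hsymm : ∀ i j, a i j = a j i) :
    (LinearMap.ker (Lmap n q a))ᗮ = LinearMap.range (Lmap n q a) := by
  rw [← (isSymmetric_Lmap hsymm).orthogonal_range, Submodule.orthogonal_orthogonal]

lemma two_mul_sum_lap_mulVec_mul_self (hsymm : ∀ i j, a i j = a j i) (c : Fin n → ℝ) :
    2 * ∑ i, (lap n a *ᵥ c) i * c i = ∑ i, ∑ k, a i k * (c i - c k) ^ 2 := by
  have hswap :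
      ∑ i, ∑ k, a i k * (c i - c k) * c i = ∑ i, ∑ k, a i k * (c k - c i) * c k := by
    rw [Finset.sum_comm]
    exact Finset.sum_congr rfl fun i _ => Finset.sum_congr rfl fun k _ => by rw [hsymm]
  simp only [lap_mulVec_apply, Finset.sum_mul]
  rw [two_mul]
  nth_rewrite 2 [hswap]
  rw [← Finset.sum_add_distrib]
  exact Finset.sum_congr rfl fun i _ => by rw [← Finset.sum_add_distrib]; congr 1; ext k; ring

lemma eq_of_lap_mulVec_eq_zero (hsymm : ∀ i j, a i j = a j i) (hnn : ∀ i j, 0 ≤ a i j)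
    (hconn : (SimpleGraph.fromRel fun i j => 0 < a i j).Connected) {c : Fin n → ℝ}
    (hc : lap n a *ᵥ c = 0) (i k : Fin n) : c i = c k := by
  have hsum : ∑ i, ∑ k, a i k * (c i - c k) ^ 2 = 0 := by
    rw [← two_mul_sum_lap_mulVec_mul_self hsymm, hc]
    simp
  have hedge : ∀ i k, 0 < a i k → c i = c k := by
    intro i k hik
    have hrow := (Fintype.sum_eq_zero_iff_of_nonneg fun i =>
      Finset.sum_nonneg fun k _ => mul_nonneg (hnn i k) (sq_nonneg _)).1 hsum
    have hterm := congrFun ((Fintype.sum_eq_zero_iff_of_nonneg fun k =>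
      mul_nonneg (hnn i k) (sq_nonneg _)).1 (congrFun hrow i)) k
    simp only [Pi.zero_apply, mul_eq_zero, hik.ne', false_or, pow_eq_zero_iff two_ne_zero,
      sub_eq_zero] at hterm
    exact hterm
  obtain ⟨w⟩ := hconn.preconnected i k
  induction w with
  | nil => rfl
  | cons hadj _ ih =>
    rw [SimpleGraph.fromRel_adj] at hadj
    exact (hadj.2.elim (hedge _ _) fun h => (hedge _ _ h).symm).trans ih

lemma exists_eq_oneTensor_of_Lmap_eq_zero (hsymm : ∀ i j, a i j = a j i)
    (hnn : ∀ i j, 0 ≤ a i j) (hconn : (SimpleGraph.fromRel fun i j => 0 < a i j).Connected)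
    {x : EuclideanSpace ℝ (Fin n × Fin q)} (hx : Lmap n q a x = 0) :
    ∃ v, x = oneTensor n q v := by
  obtain ⟨i₀⟩ := hconn.nonempty
  refine ⟨blk x i₀, ?_⟩
  ext ⟨i, j⟩
  refine eq_of_lap_mulVec_eq_zero hsymm hnn hconn (c := fun k => x (k, j)) ?_ i i₀
  ext k
  rw [← Lmap_apply, hx]
  rfl

end Laplacian

section Blocks

variable {n q : ℕ}

lemma continuous_blk (i : Fin n) :
    Continuous fun x : EuclideanSpace ℝ (Fin n × Fin q) => blk x i := by
  unfold blk
  fun_prop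

lemma convexOn_bigF {f : Fin n → EuclideanSpace ℝ (Fin q) → ℝ}
    (hf : ∀ i, ConvexOn ℝ univ (f i)) : ConvexOn ℝ univ (bigF n q f) := by
  refine ⟨convex_univ, fun x _ y _ s t hs ht hst => ?_⟩
  simp only [bigF, smul_eq_mul, Finset.mul_sum, ← Finset.sum_add_distrib]
  exact Finset.sum_le_sum fun i _ => (hf i).2 (mem_univ (blk x i)) (mem_univ (blk y i)) hs ht hst

lemma continuous_bigF {f : Fin n → EuclideanSpace ℝ (Fin q) → ℝ}
    (hf : ∀ i, Continuous (f i)) : Continuous (bigF n q f) :=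
  continuous_finsetSum _ fun i _ => (hf i).comp (continuous_blk i)

lemma convex_prodSet {Ω : Fin n → Set (EuclideanSpace ℝ (Fin q))}
    (hΩ : ∀ i, Convex ℝ (Ω i)) : Convex ℝ (prodSet n q Ω) :=
  fun _ hx _ hy _ _ hs ht hst i => hΩ i (hx i) (hy i) hs ht hst

lemma oneTensor_mem_interior_prodSet {Ω : Fin n → Set (EuclideanSpace ℝ (Fin q))}
    {z : EuclideanSpace ℝ (Fin q)} (hz : z ∈ ⋂ i, interior (Ω i)) :
    oneTensor n q z ∈ interior (prodSet n q Ω) :=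
  interior_maximal (t := ⋂ i, (blk · i) ⁻¹' interior (Ω i))
    (fun _ hx i => interior_subset (mem_iInter.1 hx i))
    (isOpen_iInter_of_finite fun i => isOpen_interior.preimage (continuous_blk i))
    (mem_iInter.2 fun i => (mem_iInter.1 hz i : z ∈ interior (Ω i)))

lemma inner_Lmap_oneTensor {a : Fin n → Fin n → ℝ} (hsymm : ∀ i j, a i j = a j i)
    (x : EuclideanSpace ℝ (Fin n × Fin q)) (v : EuclideanSpace ℝ (Fin q)) :
    ⟪Lmap n q a x, oneTensor n q v⟫ = 0 := by
  rw [isSymmetric_Lmap hsymm, Lmap_oneTensor, inner_zero_right]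

variable {a : Fin n → Fin n → ℝ} {f : Fin n → EuclideanSpace ℝ (Fin q) → ℝ}
  {Ω : Fin n → Set (EuclideanSpace ℝ (Fin q))} {xstar : EuclideanSpace ℝ (Fin q)}

lemma isMinOn_bigF_oneTensor (hsymm : ∀ i j, a i j = a j i) (hnn : ∀ i j, 0 ≤ a i j)
    (hconn : (SimpleGraph.fromRel fun i j => 0 < a i j).Connected)
    (hopt : ∀ y ∈ ⋂ i, Ω i, ∑ i, f i xstar ≤ ∑ i, f i y) :
    IsMinOn (bigF n q f) (prodSet n q Ω ∩ LinearMap.ker (Lmap n q a)) (oneTensor n q xstar) := by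
  refine isMinOn_iff.2 fun y ⟨hyΩ, hyL⟩ => ?_
  obtain ⟨v, rfl⟩ := exists_eq_oneTensor_of_Lmap_eq_zero hsymm hnn hconn hyL
  exact hopt v (mem_iInter.2 hyΩ)

lemma sum_le_sum_of_isProjOn_tangentCone (hsymm : ∀ i j, a i j = a j i) {α : ℝ}
    {g lam : EuclideanSpace ℝ (Fin n × Fin q)} (hx : oneTensor n q xstar ∈ prodSet n q Ω)
    (hg : g ∈ subdiff (bigF n q f) (oneTensor n q xstar))
    (hproj : IsProjOn (tangentCone (prodSet n q Ω) (oneTensor n q xstar))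
      (-g - α • Lmap n q a lam) 0)
    {y : EuclideanSpace ℝ (Fin q)} (hy : oneTensor n q y ∈ prodSet n q Ω) :
    ∑ i, f i xstar ≤ ∑ i, f i y := by
  have hdir := (isProjOn_tangentCone_iff hx).1 hproj _ (sub_mem_tangentCone hy)
  have hw : oneTensor n q y - oneTensor n q xstar = oneTensor n q (y - xstar) := rfl
  rw [inner_sub_left, inner_neg_left, real_inner_smul_left, hw,
    inner_Lmap_oneTensor hsymm, mul_zero, sub_zero, neg_nonpos] at hdir
  have hsub := hg (oneTensor n q y)
  rw [hw] at hsub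
  exact (le_add_of_nonneg_right hdir).trans hsub

end Blocks

theorem stmt0_general
    (n q : ℕ) (α : ℝ) (hα : 0 < α)
    (a : Fin n → Fin n → ℝ)
    (hsymm : ∀ i j, a i j = a j i) (hnn : ∀ i j, 0 ≤ a i j)
    (hconn : (SimpleGraph.fromRel fun i j => 0 < a i j).Connected)
    (f : Fin n → EuclideanSpace ℝ (Fin q) → ℝ)
    (hfconv : ∀ i, ConvexOn ℝ Set.univ (f i)) (hfcont : ∀ i, Continuous (f i))
    (Ω : Fin n → Set (EuclideanSpace ℝ (Fin q)))
    (hΩcv : ∀ i, Convex ℝ (Ω i))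
    (hint : (⋂ i, interior (Ω i)).Nonempty)
    (xstar : EuclideanSpace ℝ (Fin q)) (hxstar : xstar ∈ ⋂ i, Ω i) :
    (∀ y ∈ ⋂ i, Ω i, (∑ i, f i xstar) ≤ ∑ i, f i y) ↔
      ∃ (xbar lamstar : EuclideanSpace ℝ (Fin n × Fin q)),
        xbar ∈ prodSet n q Ω ∧ xbar = oneTensor n q xstar ∧
        Lmap n q a xbar = 0 ∧
        ∃ g ∈ subdiff (bigF n q f) xbar,
          IsProjOn (tangentCone (prodSet n q Ω) xbar)
            (-g - α • Lmap n q a lamstar) 0 := by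
  have hxΩ : oneTensor n q xstar ∈ prodSet n q Ω := mem_iInter.1 hxstar
  refine ⟨fun hopt => ?_, ?_⟩
  · obtain ⟨z, hz⟩ := hint
    obtain ⟨g, hg, d, hd, hgd⟩ := exists_subgrad_add_normal_mem_orthogonal_of_isMinOn
      (convexOn_bigF hfconv) (continuous_bigF hfcont) (convex_prodSet hΩcv)
      ⟨oneTensor n q z, oneTensor_mem_interior_prodSet hz, Lmap_oneTensor z⟩ hxΩ
      (Lmap_oneTensor xstar) (isMinOn_bigF_oneTensor hsymm hnn hconn hopt)
    obtain ⟨μ, hμ⟩ := (orthogonal_ker_Lmap hsymm).le hgd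
    refine ⟨_, -α⁻¹ • μ, hxΩ, rfl, Lmap_oneTensor xstar, g, hg, ?_⟩
    have hd' : -g - α • Lmap n q a (-α⁻¹ • μ) = d := by
      rw [map_smul, hμ, smul_smul, mul_neg, mul_inv_cancel₀ hα.ne', neg_one_smul]
      abel
    rw [hd', isProjOn_tangentCone_iff hxΩ]
    exact fun v hv => inner_nonpos_of_mem_normalCone_of_mem_tangentCone hd hv
  · rintro ⟨_, lam, -, rfl, -, g, hg, hproj⟩ y hy
    exact sum_le_sum_of_isProjOn_tangentCone hsymm hxΩ hg hproj (mem_iInter.1 hy)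

/-- optimality of x* for min over Ω₀ is equivalent to the
existence of 𝐱* = 1ₙ ⊗ x* and λ* satisfying the first-order conditions. -/
theorem stmt0
    (n q : ℕ) (hn : 2 ≤ n) (hq : 1 ≤ q) (α : ℝ) (hα : 0 < α)
    (a : Fin n → Fin n → ℝ)
    (hsymm : ∀ i j, a i j = a j i) (hnn : ∀ i j, 0 ≤ a i j) (hdiag : ∀ i, a i i = 0)
    (hconn : (SimpleGraph.fromRel fun i j => 0 < a i j).Connected)
    (f : Fin n → EuclideanSpace ℝ (Fin q) → ℝ)
    (hfconv : ∀ i, ConvexOn ℝ Set.univ (f i)) (hfcont : ∀ i, Continuous (f i))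
    (Ω : Fin n → Set (EuclideanSpace ℝ (Fin q)))
    (hΩne : ∀ i, (Ω i).Nonempty) (hΩcl : ∀ i, IsClosed (Ω i)) (hΩcv : ∀ i, Convex ℝ (Ω i))
    (hint : (⋂ i, interior (Ω i)).Nonempty)
    (xstar : EuclideanSpace ℝ (Fin q)) (hxstar : xstar ∈ ⋂ i, Ω i) :
    (∀ y ∈ ⋂ i, Ω i, (∑ i, f i xstar) ≤ ∑ i, f i y) ↔
      ∃ (xbar lamstar : EuclideanSpace ℝ (Fin n × Fin q)),
        xbar ∈ prodSet n q Ω ∧ xbar = oneTensor n q xstar ∧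
        Lmap n q a xbar = 0 ∧
        ∃ g ∈ subdiff (bigF n q f) xbar,
          IsProjOn (tangentCone (prodSet n q Ω) xbar)
            (-g - α • Lmap n q a lamstar) 0 :=
  stmt0_general n q α hα a hsymm hnn hconn f hfconv hfcont Ω hΩcv hint xstar hxstar
end
end

section
/- Let L_n ∈ ℝ^{n×n} be a symmetric positive semidefinite matrix whose largest eigenvalue λ_max(L_n) is positive, let α > 0, and let k satisfy 0 < k < 1/(α λ_max(L_n)). Then there exists a symmetric positive definite matrix Q_n ∈ ℝ^{n×n} such that α L_n − k α² L_n² = L_n Q_n L_n. -/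
/-!
Take `Q = g(Lₙ)` in the functional calculus of the symmetric matrix `Lₙ`, with
`g x = α / x - k α²` for `x ≠ 0`. Then `Lₙ Q Lₙ = (x ↦ x² g x)(Lₙ) = α Lₙ - k α² Lₙ²`, and `Q` is
positive definite because `g` is positive on the spectrum `⊆ [0, λ_max]`: there
`k α² x ≤ k α² λ_max < α`.
-/

open Matrix MatrixOrder ComplexOrder

theorem Matrix.exists_mulVec_eq_smul_of_mem_spectrum {n K : Type*} [Fintype n] [DecidableEq n]
    [Field K] {A : Matrix n n K} {x : K} (hx : x ∈ spectrum K A) :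
    ∃ v : n → K, v ≠ 0 ∧ A *ᵥ v = x • v := by
  rw [← spectrum_toLin', ← Module.End.hasEigenvalue_iff_mem_spectrum] at hx
  obtain ⟨v, hv, hv0⟩ := hx.exists_hasEigenvector
  exact ⟨v, hv0, by simpa [Module.End.mem_eigenspace_iff] using hv⟩

lemma mul_lt_of_mul_lt_of_mem_Icc {α β μ x : ℝ} (hα : 0 < α) (hβ : β * μ < α)
    (hx : x ∈ Set.Icc 0 μ) : β * x < α := by
  rcases le_or_gt 0 β with hβ0 | hβ0
  · nlinarith [hx.2]
  · nlinarith [hx.1]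

section FunctionalCalculus

variable {n 𝕜 : Type*} [Fintype n] [DecidableEq n] [RCLike 𝕜]

lemma Matrix.IsHermitian.posDef_cfc {A : Matrix n n 𝕜} (hA : A.IsHermitian) {f : ℝ → ℝ}
    (hf : ∀ x ∈ spectrum ℝ A, 0 < f x) : (cfc f A).PosDef :=
  ((cfc_isStrictlyPositive_iff f A (A.finite_real_spectrum.continuousOn f)
    hA.isSelfAdjoint).2 hf).posDef

lemma Matrix.IsHermitian.mul_cfc_mul {A : Matrix n n 𝕜} (hA : A.IsHermitian) (f : ℝ → ℝ) :
    A * cfc f A * A = cfc (fun x => x * f x * x) A := by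
  have hc := fun g : ℝ → ℝ => A.finite_real_spectrum.continuousOn g
  rw [cfc_mul _ _ _ (hc _) (hc _), cfc_mul _ _ _ (hc _) (hc _), cfc_id' ℝ A hA.isSelfAdjoint]

theorem Matrix.PosSemidef.exists_posDef_smul_sub_eq_mul_mul {A : Matrix n n 𝕜}
    (hA : A.PosSemidef) {α β μ : ℝ} (hα : 0 < α) (hβ : β * μ < α)
    (hμ : ∀ x ∈ spectrum ℝ A, x ≤ μ) :
    ∃ Q : Matrix n n 𝕜, Q.PosDef ∧ α • A - β • (A * A) = A * Q * A := by
  -- `g 0` only acts on the kernel of `A`, where any positive value will do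
  set g : ℝ → ℝ := fun x => if x = 0 then 1 else α / x - β
  refine ⟨cfc g A, hA.isHermitian.posDef_cfc fun x hx => ?_, ?_⟩
  · have hx0 : 0 ≤ x := spectrum_nonneg_of_nonneg hA.nonneg hx
    have hβx : β * x < α := mul_lt_of_mul_lt_of_mem_Icc hα hβ ⟨hx0, hμ x hx⟩
    rcases hx0.eq_or_lt with rfl | hxpos
    · simp [g]
    · simp only [g, hxpos.ne', if_false, sub_pos, lt_div_iff₀ hxpos]
      linarith
  · have hg : (fun x => x * g x * x) = fun x => α * x - β * (x * x) := by
      ext x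
      by_cases hx : x = 0
      · simp [hx]
      · simp only [g, hx, if_false]
        field_simp
    have hc := fun f : ℝ → ℝ => A.finite_real_spectrum.continuousOn f
    rw [hA.isHermitian.mul_cfc_mul, hg, cfc_sub _ _ _ (hc _) (hc _), cfc_const_mul _ _ _ (hc _),
      cfc_const_mul _ _ _ (hc _), cfc_mul _ _ _ (hc _) (hc _),
      cfc_id' ℝ A hA.isHermitian.isSelfAdjoint]

end FunctionalCalculus

theorem stmt4_general (n : ℕ) (Ln : Matrix (Fin n) (Fin n) ℝ)
    (hpsd : Ln.PosSemidef)
    (μ : ℝ) (hμpos : 0 < μ)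
    (hμmax : ∀ μ' : ℝ, (∃ v : Fin n → ℝ, v ≠ 0 ∧ Ln.mulVec v = μ' • v) → μ' ≤ μ)
    (α k : ℝ) (hα : 0 < α) (hk1 : k < 1 / (α * μ)) :
    ∃ Q : Matrix (Fin n) (Fin n) ℝ, Q.IsSymm ∧ Q.PosDef ∧
      α • Ln - (k * α ^ 2) • (Ln * Ln) = Ln * Q * Ln := by
  have hkμ : k * α ^ 2 * μ < α := by
    have := (lt_div_iff₀ (by positivity)).1 hk1
    nlinarith
  obtain ⟨Q, hQ, hLQL⟩ := hpsd.exists_posDef_smul_sub_eq_mul_mul hα hkμ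
    fun x hx => hμmax x (exists_mulVec_eq_smul_of_mem_spectrum hx)
  exact ⟨Q, isHermitian_iff_isSymm.1 hQ.isHermitian, hQ, hLQL⟩

/-- for a symmetric PSD matrix `Lₙ` with positive largest eigenvalue `μ`,
`α > 0` and `0 < k < 1/(αμ)`, there is a symmetric positive definite `Qₙ` with
`αLₙ − kα²Lₙ² = Lₙ Qₙ Lₙ`. -/
theorem stmt4 (n : ℕ) (Ln : Matrix (Fin n) (Fin n) ℝ)
    (hsymm : Ln.IsSymm) (hpsd : Ln.PosSemidef)
    (μ : ℝ) (hμpos : 0 < μ)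
    (hμeig : ∃ v : Fin n → ℝ, v ≠ 0 ∧ Ln.mulVec v = μ • v)
    (hμmax : ∀ μ' : ℝ, (∃ v : Fin n → ℝ, v ≠ 0 ∧ Ln.mulVec v = μ' • v) → μ' ≤ μ)
    (α k : ℝ) (hα : 0 < α) (hk0 : 0 < k) (hk1 : k < 1 / (α * μ)) :
    ∃ Q : Matrix (Fin n) (Fin n) ℝ, Q.IsSymm ∧ Q.PosDef ∧
      α • Ln - (k * α ^ 2) • (Ln * Ln) = Ln * Q * Ln :=
  stmt4_general n Ln hpsd μ hμpos hμmax α k hα hk1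
end
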